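/- arXiv:2108.05266 — 6 statements merged into one kernel-verified Lean document; each statement's English description precedes it below -/
import Mathlib

section
/- The doubly exponential sequence defined by a(1) = 1 and a(d+1) = a(d)^2 + a(d) satisfies a(d) ≥ ⌊(3/2)^(2^(d-1))⌋ for all d ≥ 1. -/
/-! Shifting by one half turns the recurrence into `b (d+1) = b d ^ 2 + 1/4` for
`b d = a d + 1/2`, so `b d ≥ b 1 ^ 2 ^ (d-1) = (3/2) ^ 2 ^ (d-1)`; since `b d < a d + 1`,
the floor of `(3/2) ^ 2 ^ (d-1)` is at most `a d`. -/

theorem pow_two_pow_le_of_sq_le_succ {R : Type*} [Semiring R] [PartialOrder R]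
    [IsOrderedRing R] {b : ℕ → R} {c : R} (hc : 0 ≤ c) (h0 : c ≤ b 0)
    (hsq : ∀ n, b n ^ 2 ≤ b (n + 1)) (n : ℕ) : c ^ 2 ^ n ≤ b n := by
  induction n with
  | zero => simpa using h0
  | succ n ih =>
    calc c ^ 2 ^ (n + 1) = (c ^ 2 ^ n) ^ 2 := by rw [pow_succ, pow_mul]
      _ ≤ b n ^ 2 := pow_le_pow_left₀ (pow_nonneg hc _) ih 2
      _ ≤ b (n + 1) := hsq n

/-- The doubly exponential sequence with `a 1 = 1` and `a (d+1) = a d ^ 2 + a d`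
satisfies `a d ≥ ⌊(3/2) ^ (2 ^ (d-1))⌋` for all `d ≥ 1`. -/
theorem stmt_0 (a : ℕ → ℕ) (h1 : a 1 = 1)
    (hrec : ∀ d, 1 ≤ d → a (d + 1) = (a d) ^ 2 + a d) :
    ∀ d, 1 ≤ d → ⌊((3 : ℚ) / 2) ^ (2 ^ (d - 1))⌋ ≤ (a d : ℤ) := by
  intro d hd
  obtain ⟨n, rfl⟩ : ∃ n, d = n + 1 := ⟨d - 1, by omega⟩
  have hsq (m : ℕ) : ((a (m + 1) : ℚ) + 1 / 2) ^ 2 ≤ (a (m + 1 + 1) : ℚ) + 1 / 2 := by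
    rw [hrec (m + 1) (by omega)]
    push_cast
    linarith
  have hbound : ((3 : ℚ) / 2) ^ 2 ^ n ≤ (a (n + 1) : ℚ) + 1 / 2 :=
    pow_two_pow_le_of_sq_le_succ (b := fun m ↦ (a (m + 1) : ℚ) + 1 / 2) (by norm_num)
      (by norm_num [h1]) hsq n
  rw [Nat.add_sub_cancel, Int.floor_le_iff]
  push_cast
  linarith
end

section
/- Let f ∈ F_n and x an instance with f(x) = 1, and let ℓ be a literal satisfied by x. Then the set of sufficient reasons for x given f equals the union of (i) the sufficient reasons for x given (f | ℓ) ∧ (f | ℓ̄), and (ii) the terms ℓ ∧ t_ℓ where t_ℓ is a sufficient reason for x given f | ℓ such that t_ℓ does not imply f | ℓ̄. -/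
/-- A term (or clause) over variables `V`: a finite set of literals,
where a literal is a pair (variable, polarity). -/
abbrev Term (V : Type*) := Finset (V × Bool)

/-- An assignment `y` satisfies a term `t` if all its literals hold. -/
def Term.sat {V : Type*} (t : Term V) (y : V → Bool) : Prop :=
  ∀ p ∈ t, y p.1 = p.2

/-- A term is consistent if no variable occurs with both polarities. -/
def Term.consistent {V : Type*} (t : Term V) : Prop :=
  ∀ v : V, ¬((v, true) ∈ t ∧ (v, false) ∈ t)

/-- `t` is an implicant of `f`: a consistent term all of whose models are models of `f`. -/
def Implicant {V : Type*} (f : (V → Bool) → Bool) (t : Term V) : Prop :=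
  Term.consistent t ∧ ∀ y, Term.sat t y → f y = true

/-- `t` is a prime implicant of `f`: an implicant no proper subterm of which is an implicant. -/
def PrimeImplicant {V : Type*} (f : (V → Bool) → Bool) (t : Term V) : Prop :=
  Implicant f t ∧ ∀ s ⊂ t, ¬ Implicant f s

/-- A sufficient reason for `x` given `f`: a prime implicant of `f` covering `x`. -/
def SuffReason {V : Type*} (f : (V → Bool) → Bool) (x : V → Bool) (t : Term V) : Prop :=
  PrimeImplicant f t ∧ Term.sat t x

/-- Conditioning of `f` by the literal `ℓ`: substitute the value making `ℓ` true. -/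
def condF {V : Type*} [DecidableEq V] (f : (V → Bool) → Bool) (l : V × Bool) :
    (V → Bool) → Bool :=
  fun y => f (Function.update y l.1 l.2)

/-!
Write `ℓ = (v, b)` with `x v = b`. A term covering `x` cannot contain `ℓ̄`, so a sufficient reason
for `x` given `f` either avoids `v` or has the form `ℓ ∧ t` with `t` avoiding `v`. For a term `t`
avoiding `v`, `t ⊨ f` iff `t ⊨ f | ℓ` and `t ⊨ f | ℓ̄`, and `ℓ ∧ t ⊨ f` iff `t ⊨ f | ℓ`; primality
transfers along these equivalences, the extra condition `t ⊭ f | ℓ̄` being exactly what keeps `t`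
itself from being a smaller implicant of `f`. Conversely, prime implicants of functions that do not
depend on `v`, such as `f | ℓ` and `(f | ℓ) ∧ (f | ℓ̄)`, avoid `v`.
-/

theorem Finset.insert_ssubset_insert_iff_of_notMem {α : Type*} [DecidableEq α] {a : α}
    {s t : Finset α} (hs : a ∉ s) (ht : a ∉ t) : insert a s ⊂ insert a t ↔ s ⊂ t := by
  simp only [Finset.ssubset_def, Finset.insert_subset_insert_iff hs,
    Finset.insert_subset_insert_iff ht]

namespace Term

variable {V : Type*}

def Entails (t : Term V) (f : (V → Bool) → Bool) : Prop :=
  ∀ y, t.sat y → f y = true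

def Avoids (t : Term V) (v : V) : Prop :=
  ∀ p ∈ t, p.1 ≠ v

theorem avoids_iff {t : Term V} {v : V} : t.Avoids v ↔ ∀ c, (v, c) ∉ t :=
  ⟨fun h c hc => h _ hc rfl, by rintro h ⟨w, c⟩ hp rfl; exact h c hp⟩

theorem Avoids.mono {s t : Term V} {v : V} (hst : s ⊆ t) (ht : t.Avoids v) : s.Avoids v :=
  fun p hp => ht p (hst hp)

theorem sat.mono {s t : Term V} {y : V → Bool} (hst : s ⊆ t) (ht : t.sat y) : s.sat y :=
  fun p hp => ht p (hst hp)

theorem consistent.mono {s t : Term V} (hst : s ⊆ t) (ht : t.consistent) : s.consistent :=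
  fun v hv => ht v ⟨hst hv.1, hst hv.2⟩

theorem entails_and_iff {t : Term V} {f g : (V → Bool) → Bool} :
    t.Entails (fun y => f y && g y) ↔ t.Entails f ∧ t.Entails g := by
  simp only [Entails, Bool.and_eq_true]
  exact ⟨fun h => ⟨fun y hy => (h y hy).1, fun y hy => (h y hy).2⟩,
    fun h y hy => ⟨h.1 y hy, h.2 y hy⟩⟩

variable [DecidableEq V]

theorem sat_insert {t : Term V} {p : V × Bool} {y : V → Bool} :
    Term.sat (insert p t) y ↔ y p.1 = p.2 ∧ t.sat y :=
  Finset.forall_mem_insert _ _ _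

theorem Avoids.consistent_insert {t : Term V} {v : V} (ht : t.Avoids v) (hc : t.consistent)
    (b : Bool) : Term.consistent (insert (v, b) t) := by
  rintro w ⟨htrue, hfalse⟩
  rw [Finset.mem_insert] at htrue hfalse
  rcases htrue with htrue | htrue <;> rcases hfalse with hfalse | hfalse
  · simp_all
  · exact ht _ hfalse (congrArg Prod.fst htrue)
  · exact ht _ htrue (congrArg Prod.fst hfalse)
  · exact hc w ⟨htrue, hfalse⟩

theorem sat.avoids_erase {t : Term V} {y : V → Bool} (ht : t.sat y) (v : V) :
    Avoids (t.erase (v, y v)) v := by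
  refine avoids_iff.2 fun c hc => ?_
  obtain ⟨hne, hmem⟩ := Finset.mem_erase.1 hc
  exact hne (by rw [ht _ hmem])

theorem consistent.avoids_erase {t : Term V} {v : V} {c : Bool} (ht : t.consistent)
    (hc : (v, c) ∈ t) : Avoids (t.erase (v, c)) v := by
  refine avoids_iff.2 fun d hd => ?_
  obtain ⟨hne, hmem⟩ := Finset.mem_erase.1 hd
  cases c <;> cases d
  exacts [hne rfl, ht v ⟨hmem, hc⟩, ht v ⟨hc, hmem⟩, hne rfl]

theorem Avoids.sat_update_iff {t : Term V} {v : V} (ht : t.Avoids v) (y : V → Bool) (c : Bool) :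
    t.sat (Function.update y v c) ↔ t.sat y := by
  refine forall₂_congr fun p hp => ?_
  rw [Function.update_of_ne (ht p hp)]

/-- Shannon expansion on the level of entailment by a term that does not mention `v`. -/
theorem Avoids.entails_iff_condF {t : Term V} {v : V} (ht : t.Avoids v) (f : (V → Bool) → Bool)
    (b : Bool) :
    t.Entails f ↔ t.Entails (condF f (v, b)) ∧ t.Entails (condF f (v, !b)) := by
  refine ⟨fun h => ⟨fun y hy => h _ ((ht.sat_update_iff y _).2 hy),
    fun y hy => h _ ((ht.sat_update_iff y _).2 hy)⟩, fun ⟨hb, hnb⟩ y hy => ?_⟩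
  rw [← Function.update_eq_self v y]
  rcases Bool.eq_or_eq_not (y v) b with hyv | hyv
  · rw [hyv]; exact hb y hy
  · rw [hyv]; exact hnb y hy

theorem Avoids.entails_insert_iff {t : Term V} {v : V} (ht : t.Avoids v) (f : (V → Bool) → Bool)
    (b : Bool) : Term.Entails (insert (v, b) t) f ↔ t.Entails (condF f (v, b)) := by
  refine ⟨fun h y hy => h _ ((sat_insert (p := (v, b))).2
    ⟨Function.update_self .., (ht.sat_update_iff y b).2 hy⟩), fun h y hy => ?_⟩
  obtain ⟨hyv, hy⟩ := sat_insert.1 hy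
  have := h y hy
  rwa [condF, ← hyv, Function.update_eq_self] at this

end Term

open Term

variable {V : Type*}

theorem PrimeImplicant.congr {f g : (V → Bool) → Bool} {t : Term V}
    (h : ∀ s ⊆ t, Implicant f s ↔ Implicant g s) : PrimeImplicant f t ↔ PrimeImplicant g t :=
  and_congr (h t subset_rfl) (forall₂_congr fun s hs => not_congr (h s hs.subset))

variable [DecidableEq V]

theorem condF_update (f : (V → Bool) → Bool) (l : V × Bool) (y : V → Bool) (c : Bool) :
    condF f l (Function.update y l.1 c) = condF f l y := by
  simp only [condF, Function.update_idem]

theorem PrimeImplicant.avoids {h : (V → Bool) → Bool} {t : Term V} {v : V}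
    (hinv : ∀ y c, h (Function.update y v c) = h y) (hp : PrimeImplicant h t) : t.Avoids v := by
  refine avoids_iff.2 fun c hc => hp.2 _ (Finset.erase_ssubset hc)
    ⟨hp.1.1.mono (Finset.erase_subset _ _), fun y hy => ?_⟩
  have hupd : t.sat (Function.update y v c) := by
    rw [← Finset.insert_erase hc, sat_insert]
    exact ⟨Function.update_self .., ((hp.1.1.avoids_erase hc).sat_update_iff y c).2 hy⟩
  rw [← hinv y c]
  exact hp.1.2 _ hupd

theorem Term.Avoids.primeImplicant_iff_and_condF {t : Term V} {v : V} (ht : t.Avoids v)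
    (f : (V → Bool) → Bool) (b : Bool) :
    PrimeImplicant f t ↔
      PrimeImplicant (fun y => condF f (v, b) y && condF f (v, !b) y) t :=
  PrimeImplicant.congr fun _ hs =>
    and_congr_right' ((ht.mono hs).entails_iff_condF f b |>.trans entails_and_iff.symm)

theorem Term.Avoids.implicant_insert_iff {t : Term V} {v : V} (ht : t.Avoids v)
    (f : (V → Bool) → Bool) (b : Bool) :
    Implicant f (insert (v, b) t) ↔ Implicant (condF f (v, b)) t :=
  ⟨fun h => ⟨h.1.mono (Finset.subset_insert _ _), (ht.entails_insert_iff f b).1 h.2⟩,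
    fun h => ⟨ht.consistent_insert h.1 b, (ht.entails_insert_iff f b).2 h.2⟩⟩

theorem Term.Avoids.primeImplicant_insert_iff {t : Term V} {v : V} (ht : t.Avoids v)
    (f : (V → Bool) → Bool) (b : Bool) :
    PrimeImplicant f (insert (v, b) t) ↔
      PrimeImplicant (condF f (v, b)) t ∧ ¬ t.Entails (condF f (v, !b)) := by
  have hnotMem : (v, b) ∉ t := avoids_iff.1 ht b
  constructor
  · rintro ⟨hi, hprime⟩
    have hti := (ht.implicant_insert_iff f b).1 hi
    refine ⟨⟨hti, fun s hs hs_imp => ?_⟩, fun hnb => ?_⟩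
    · have hav : s.Avoids v := ht.mono hs.subset
      refine hprime _ ?_ ((hav.implicant_insert_iff f b).2 hs_imp)
      exact (Finset.insert_ssubset_insert_iff_of_notMem (avoids_iff.1 hav b) hnotMem).2 hs
    · exact hprime t (Finset.ssubset_insert hnotMem)
        ⟨hti.1, (ht.entails_iff_condF f b).2 ⟨hti.2, hnb⟩⟩
  · rintro ⟨⟨hi, hprime⟩, hnb⟩
    refine ⟨(ht.implicant_insert_iff f b).2 hi, fun s hs hs_imp => ?_⟩
    by_cases hvb : (v, b) ∈ s
    · have hsub : s.erase (v, b) ⊂ t := by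
        rwa [← Finset.insert_erase hvb, Finset.insert_ssubset_insert_iff_of_notMem] at hs
        exacts [Finset.notMem_erase _ _, hnotMem]
      rw [← Finset.insert_erase hvb, (ht.mono hsub.subset).implicant_insert_iff] at hs_imp
      exact hprime _ hsub hs_imp
    · have hsub : s ⊆ t := (Finset.subset_insert_iff_of_notMem hvb).1 hs.subset
      have hboth := ((ht.mono hsub).entails_iff_condF f b).1 hs_imp.2
      rcases hsub.eq_or_ssubset with rfl | hss
      · exact hnb hboth.2
      · exact hprime s hss ⟨hs_imp.1, hboth.1⟩

theorem stmt_5_general {n : ℕ} (f : (Fin n → Bool) → Bool) (x : Fin n → Bool)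
    (l : Fin n × Bool) (hl : x l.1 = l.2) :
    {t : Term (Fin n) | SuffReason f x t} =
      {t : Term (Fin n) |
        SuffReason (fun y => condF f l y && condF f (l.1, !l.2) y) x t} ∪
      {s : Term (Fin n) | ∃ t : Term (Fin n),
        SuffReason (condF f l) x t ∧
        ¬ (∀ y, Term.sat t y → condF f (l.1, !l.2) y = true) ∧
        s = insert l t} := by
  obtain ⟨v, b⟩ := l
  dsimp only at hl
  ext t
  simp only [Set.mem_ofPred_eq, Set.mem_union, SuffReason]
  constructor
  · rintro ⟨hprime, hsat⟩
    have hav := hsat.avoids_erase v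
    rw [hl] at hav
    by_cases hvb : (v, b) ∈ t
    · rw [← Finset.insert_erase hvb, hav.primeImplicant_insert_iff] at hprime
      exact Or.inr ⟨_, ⟨hprime.1, hsat.mono (Finset.erase_subset _ _)⟩, hprime.2,
        (Finset.insert_erase hvb).symm⟩
    · rw [Finset.erase_eq_of_notMem hvb] at hav
      exact Or.inl ⟨(hav.primeImplicant_iff_and_condF f b).1 hprime, hsat⟩
  · rintro (⟨hprime, hsat⟩ | ⟨t, ⟨hprime, hsat⟩, hnb, rfl⟩)
    · have hav : t.Avoids v := hprime.avoids fun y c => by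
        simp only [condF_update f (v, _) y c]
      exact ⟨(hav.primeImplicant_iff_and_condF f b).2 hprime, hsat⟩
    · have hav : t.Avoids v := hprime.avoids (condF_update f (v, b))
      exact ⟨(hav.primeImplicant_insert_iff f b).2 ⟨hprime, hnb⟩,
        (sat_insert (p := (v, b))).2 ⟨hl, hsat⟩⟩

/-- Recursive characterization of the set of sufficient reasons: for a literal `ℓ`
satisfied by `x`, the sufficient reasons for `x` given `f` are those given
`(f | ℓ) ∧ (f | ℓ̄)`, together with the terms `ℓ ∧ t` where `t` is a sufficient reason
for `x` given `f | ℓ` that does not imply `f | ℓ̄`. -/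
theorem stmt_5 {n : ℕ} (f : (Fin n → Bool) → Bool) (x : Fin n → Bool)
    (l : Fin n × Bool) (hx : f x = true) (hl : x l.1 = l.2) :
    {t : Term (Fin n) | SuffReason f x t} =
      {t : Term (Fin n) |
        SuffReason (fun y => condF f l y && condF f (l.1, !l.2) y) x t} ∪
      {s : Term (Fin n) | ∃ t : Term (Fin n),
        SuffReason (condF f l) x t ∧
        ¬ (∀ y, Term.sat t y → condF f (l.1, !l.2) y = true) ∧
        s = insert l t} :=
  stmt_5_general f x l hl
end

section
/- Let f ∈ F_n and x an instance, and let ℓ be a literal satisfied by x with variable in Var(f). Then the set of sufficient reasons for x given (f | ℓ) ∧ (f | ℓ̄) equals the maximal elements under implication of the set {t_ℓ ∧ t_ℓ̄ : t_ℓ a sufficient reason for x given f | ℓ, t_ℓ̄ a sufficient reason for x given f | ℓ̄}. -/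
/-- The set of conjunctions of a sufficient reason for `x` given `f | ℓ` with a
sufficient reason for `x` given `f | ℓ̄`. -/
def prodSet {V : Type*} [DecidableEq V] (f : (V → Bool) → Bool) (x : V → Bool)
    (l : V × Bool) : Set (Term V) :=
  {s : Term V | ∃ t₁ t₂ : Term V,
    SuffReason (condF f l) x t₁ ∧ SuffReason (condF f (l.1, !l.2)) x t₂ ∧ s = t₁ ∪ t₂}

/-!
A term implies `g ∧ h` iff it implies both `g` and `h`, and every implicant contains a prime
one. So a sufficient reason `t` for `x` given `g ∧ h` contains `t₁ ∪ t₂` for sufficient reasons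
`t₁`, `t₂` given `g` and `h`; that union is again an implicant of `g ∧ h` covering `x`, so
primality forces `t = t₁ ∪ t₂`, and the same argument shows that a proper subterm of some
`t₁ ∪ t₂` that implies `g ∧ h` contains a smaller such union.
-/

namespace Term

variable {V : Type*} {s t : Term V} {y : V → Bool}

lemma sat_mono (h : s ⊆ t) (ht : t.sat y) : s.sat y := fun p hp => ht p (h hp)

lemma sat_union [DecidableEq V] (hs : s.sat y) (ht : t.sat y) : (s ∪ t).sat y :=
  fun p hp => (Finset.mem_union.mp hp).elim (hs p) (ht p)

lemma consistent_of_sat (h : t.sat y) : t.consistent := by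
  rintro v ⟨htrue, hfalse⟩
  simpa [h _ htrue] using h _ hfalse

end Term

section

variable {V : Type*} {g h : (V → Bool) → Bool} {x : V → Bool} {s t t₁ t₂ : Term V}

lemma implicant_and_iff :
    Implicant (fun y => g y && h y) t ↔ Implicant g t ∧ Implicant h t := by
  simp only [Implicant, Bool.and_eq_true]
  exact ⟨fun ⟨hc, hi⟩ => ⟨⟨hc, fun y hy => (hi y hy).1⟩, ⟨hc, fun y hy => (hi y hy).2⟩⟩,
    fun ⟨⟨hc, hg⟩, ⟨_, hh⟩⟩ => ⟨hc, fun y hy => ⟨hg y hy, hh y hy⟩⟩⟩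

lemma Implicant.exists_primeImplicant_subset (ht : Implicant g t) :
    ∃ s ⊆ t, PrimeImplicant g s := by
  induction t using Finset.strongInductionOn with
  | _ t ih =>
    by_cases hprime : ∀ s ⊂ t, ¬ Implicant g s
    · exact ⟨t, subset_rfl, ht, hprime⟩
    · push Not at hprime
      obtain ⟨s, hst, hs⟩ := hprime
      obtain ⟨u, hus, hu⟩ := ih s hst hs
      exact ⟨u, hus.trans hst.subset, hu⟩

variable [DecidableEq V]

lemma SuffReason.implicant_and_union (h₁ : SuffReason g x t₁) (h₂ : SuffReason h x t₂) :
    Implicant (fun y => g y && h y) (t₁ ∪ t₂) := by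
  have hsat := Term.sat_union h₁.2 h₂.2
  simp only [Implicant, Bool.and_eq_true]
  exact ⟨Term.consistent_of_sat hsat, fun y hy =>
    ⟨h₁.1.1.2 y (Term.sat_mono Finset.subset_union_left hy),
      h₂.1.1.2 y (Term.sat_mono Finset.subset_union_right hy)⟩⟩

lemma Implicant.exists_suffReason_union_subset (hs : Implicant (fun y => g y && h y) s)
    (hsx : s.sat x) :
    ∃ t₁ t₂, SuffReason g x t₁ ∧ SuffReason h x t₂ ∧ t₁ ∪ t₂ ⊆ s := by
  obtain ⟨hg, hh⟩ := implicant_and_iff.mp hs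
  obtain ⟨t₁, ht₁s, ht₁⟩ := hg.exists_primeImplicant_subset
  obtain ⟨t₂, ht₂s, ht₂⟩ := hh.exists_primeImplicant_subset
  exact ⟨t₁, t₂, ⟨ht₁, Term.sat_mono ht₁s hsx⟩, ⟨ht₂, Term.sat_mono ht₂s hsx⟩,
    Finset.union_subset ht₁s ht₂s⟩

variable (g h x) in
def suffReasonUnions : Set (Term V) :=
  {s | ∃ t₁ t₂, SuffReason g x t₁ ∧ SuffReason h x t₂ ∧ s = t₁ ∪ t₂}

theorem suffReason_and_iff :
    SuffReason (fun y => g y && h y) x t ↔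
      t ∈ suffReasonUnions g h x ∧ ∀ t' ∈ suffReasonUnions g h x, ¬ t' ⊂ t := by
  constructor
  · rintro ⟨⟨ht, hprime⟩, htx⟩
    obtain ⟨t₁, t₂, h₁, h₂, hsub⟩ := ht.exists_suffReason_union_subset htx
    have heq : t₁ ∪ t₂ = t := by
      by_contra hne
      exact hprime _ (hsub.ssubset_of_ne hne) (h₁.implicant_and_union h₂)
    refine ⟨⟨t₁, t₂, h₁, h₂, heq.symm⟩, ?_⟩
    rintro _ ⟨s₁, s₂, hs₁, hs₂, rfl⟩ hlt
    exact hprime _ hlt (hs₁.implicant_and_union hs₂)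
  · rintro ⟨⟨t₁, t₂, h₁, h₂, rfl⟩, hmin⟩
    have htx := Term.sat_union h₁.2 h₂.2
    refine ⟨⟨h₁.implicant_and_union h₂, fun s hlt hs => ?_⟩, htx⟩
    obtain ⟨u₁, u₂, hu₁, hu₂, hsub⟩ :=
      hs.exists_suffReason_union_subset (Term.sat_mono hlt.subset htx)
    exact hmin _ ⟨u₁, u₂, hu₁, hu₂, rfl⟩ (hsub.trans_ssubset hlt)

end

theorem stmt_6_general {n : ℕ} (f : (Fin n → Bool) → Bool) (x : Fin n → Bool)
    (l : Fin n × Bool) :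
    {t : Term (Fin n) |
        SuffReason (fun y => condF f l y && condF f (l.1, !l.2) y) x t} =
      {t : Term (Fin n) | t ∈ prodSet f x l ∧ ∀ t' ∈ prodSet f x l, ¬ t' ⊂ t} := by
  ext t
  exact suffReason_and_iff

/-- The sufficient reasons for `x` given `(f | ℓ) ∧ (f | ℓ̄)` are exactly the maximal
elements under implication (i.e., the minimal elements under inclusion, viewing terms
as sets of literals) of the set of conjunctions `t_ℓ ∧ t_ℓ̄` of sufficient reasons for
`x` given `f | ℓ` and given `f | ℓ̄`, respectively. -/
theorem stmt_6 {n : ℕ} (f : (Fin n → Bool) → Bool) (x : Fin n → Bool)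
    (l : Fin n × Bool) (hl : x l.1 = l.2)
    (hvar : ∃ y, f (Function.update y l.1 true) ≠ f (Function.update y l.1 false)) :
    {t : Term (Fin n) |
        SuffReason (fun y => condF f l y && condF f (l.1, !l.2) y) x t} =
      {t : Term (Fin n) | t ∈ prodSet f x l ∧ ∀ t' ∈ prodSet f x l, ¬ t' ⊂ t} :=
  stmt_6_general f x l
end

section
/- Consider the Boolean function f_k on 2k-1 variables defined recursively by f_1 = x_1 and f_{k+1} = (¬x_{2k} ∧ x_{2k+1}) ∨ (x_{2k} ∧ f_k') where f_k' is f_k on fresh variables (i.e., the 'caterpillar' decision tree of depth k). For the all-ones instance x, the number of minimal sufficient reasons for x given f_k is 2^(k-1), and each minimal sufficient reason contains exactly k literals. -/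
/-- A minimal sufficient reason: a sufficient reason of minimum cardinality. -/
def MinSuffReason {V : Type*} (f : (V → Bool) → Bool) (x : V → Bool) (t : Term V) : Prop :=
  SuffReason f x t ∧ ∀ s : Term V, SuffReason f x s → t.card ≤ s.card

/-- The 'caterpillar' Boolean function: `cat 1 = x 1` and
`cat (k+1) = (¬ x (2k) ∧ x (2k+1)) ∨ (x (2k) ∧ cat k)`,
where `cat k` depends only on the (fresh w.r.t. `x (2k)`, `x (2k+1)`) variables
`x 1, ..., x (2k-1)`. -/
def cat : ℕ → (ℕ → Bool) → Bool
  | 0, _ => false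
  | 1, y => y 1
  | (k + 2), y =>
      (!(y (2 * (k + 1))) && y (2 * (k + 1) + 1)) || (y (2 * (k + 1)) && cat (k + 1) y)

/-!
A term covering the instance `x` is just `x` restricted to a set `s` of variables, so the
sufficient reasons for `x` are the inclusion-minimal sets `s` on which agreeing with `x` forces
`f`. For the caterpillar and the all-ones instance, `s` forces `cat k` exactly when it meets
each of the disjoint blocks `{1}, {2, 3}, …, {2k - 2, 2k - 1}`; the minimal such sets pick one
variable per block, so there are `1 · 2 ^ (k - 1)` of them, each of size `k`.
-/

open Finset Function

section Restrict

variable {V : Type*}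

def Term.literal (x : V → Bool) : V ↪ V × Bool :=
  ⟨fun v => (v, x v), fun _ _ h => (Prod.mk.inj h).1⟩

theorem Term.literal_apply (x : V → Bool) (v : V) : Term.literal x v = (v, x v) := rfl

def Term.restrict (x : V → Bool) (s : Finset V) : Term V :=
  s.map (Term.literal x)

def IsSufficientSet (f : (V → Bool) → Bool) (x : V → Bool) (s : Finset V) : Prop :=
  ∀ y : V → Bool, (∀ v ∈ s, y v = x v) → f y = true

theorem Term.mem_restrict {x : V → Bool} {s : Finset V} {p : V × Bool} :
    p ∈ Term.restrict x s ↔ p.1 ∈ s ∧ p.2 = x p.1 := by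
  obtain ⟨v, b⟩ := p
  simp only [Term.restrict, Finset.mem_map, Term.literal_apply, Prod.mk.injEq]
  constructor
  · rintro ⟨w, hw, rfl, rfl⟩
    exact ⟨hw, rfl⟩
  · rintro ⟨hv, rfl⟩
    exact ⟨v, hv, rfl, rfl⟩

theorem Term.restrict_injective (x : V → Bool) : Injective (Term.restrict x) :=
  Finset.map_injective _

theorem Term.card_restrict (x : V → Bool) (s : Finset V) : (Term.restrict x s).card = s.card :=
  Finset.card_map _

theorem Term.sat_restrict {x y : V → Bool} {s : Finset V} :
    (Term.restrict x s).sat y ↔ ∀ v ∈ s, y v = x v :=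
  Finset.forall_mem_map

theorem Term.consistent_restrict (x : V → Bool) (s : Finset V) :
    (Term.restrict x s).consistent := by
  rintro v ⟨hv, hv'⟩
  exact Bool.false_ne_true ((Term.mem_restrict.1 hv').2.trans (Term.mem_restrict.1 hv).2.symm)

theorem Term.exists_eq_restrict_of_sat {x : V → Bool} {t : Term V} (h : t.sat x) :
    ∃ s, t = Term.restrict x s := by
  classical
  refine ⟨t.image Prod.fst, Finset.ext fun p => ?_⟩
  rw [Term.mem_restrict, Finset.mem_image]
  constructor
  · intro hp
    exact ⟨⟨p, hp, rfl⟩, (h p hp).symm⟩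
  · rintro ⟨⟨q, hq, hqp⟩, hp⟩
    rwa [← Prod.ext hqp ((h q hq).symm.trans ((congrArg x hqp).trans hp.symm))]

theorem implicant_restrict_iff {f : (V → Bool) → Bool} {x : V → Bool} {s : Finset V} :
    Implicant f (Term.restrict x s) ↔ IsSufficientSet f x s := by
  simp only [Implicant, Term.sat_restrict, IsSufficientSet, Term.consistent_restrict, true_and]

theorem primeImplicant_restrict_iff {f : (V → Bool) → Bool} {x : V → Bool} {s : Finset V} :
    PrimeImplicant f (Term.restrict x s) ↔ Minimal (IsSufficientSet f x) s := by
  rw [PrimeImplicant, minimal_iff_forall_lt, implicant_restrict_iff]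
  refine and_congr_right fun _ => ⟨fun h s' hs' => ?_, fun h u hu => ?_⟩
  · rw [← implicant_restrict_iff]
    exact h _ (Finset.map_ssubset_map.2 hs')
  · obtain ⟨s', -, rfl⟩ := Finset.subset_map_iff.1 hu.subset
    rw [← Term.restrict, implicant_restrict_iff]
    exact h (Finset.map_ssubset_map.1 hu)

theorem suffReason_iff {f : (V → Bool) → Bool} {x : V → Bool} {t : Term V} :
    SuffReason f x t ↔ ∃ s, Minimal (IsSufficientSet f x) s ∧ t = Term.restrict x s := by
  constructor
  · rintro ⟨hprime, hsat⟩
    obtain ⟨s, rfl⟩ := Term.exists_eq_restrict_of_sat hsat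
    exact ⟨s, primeImplicant_restrict_iff.1 hprime, rfl⟩
  · rintro ⟨s, hs, rfl⟩
    exact ⟨primeImplicant_restrict_iff.2 hs, Term.sat_restrict.2 fun _ _ => rfl⟩

theorem minSuffReason_iff_of_card_eq {f : (V → Bool) → Bool} {x : V → Bool} {n : ℕ}
    (h : ∀ t, SuffReason f x t → t.card = n) {t : Term V} :
    MinSuffReason f x t ↔ SuffReason f x t :=
  ⟨And.left, fun ht => ⟨ht, fun s hs => (h t ht).trans (h s hs).symm |>.le⟩⟩

end Restrict

section Transversal

variable {ι α : Type*} [Fintype ι] [DecidableEq ι] [DecidableEq α] {B : ι → Finset α}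

def IsTransversal (B : ι → Finset α) (s : Finset α) : Prop :=
  ∀ i, ∃ a ∈ B i, a ∈ s

omit [Fintype ι] [DecidableEq ι] [DecidableEq α] in
theorem eq_of_mem_of_pairwise_disjoint (hB : Pairwise (Disjoint on B)) {i j : ι} {a : α}
    (hi : a ∈ B i) (hj : a ∈ B j) : i = j := by
  by_contra hij
  exact Finset.disjoint_left.1 (hB hij) hi hj

theorem isTransversal_image_of_mem_piFinset {c : ι → α} (hc : c ∈ Fintype.piFinset B) :
    IsTransversal B (univ.image c) :=
  fun i => ⟨c i, Fintype.mem_piFinset.1 hc i, Finset.mem_image_of_mem c (mem_univ i)⟩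

theorem minimal_isTransversal_iff (hB : Pairwise (Disjoint on B)) {s : Finset α} :
    Minimal (IsTransversal B) s ↔ s ∈ (Fintype.piFinset B).image fun c => univ.image c := by
  rw [Finset.mem_image]
  constructor
  · intro hs
    choose c hcB hcs using hs.prop
    have hc : c ∈ Fintype.piFinset B := Fintype.mem_piFinset.2 hcB
    refine ⟨c, hc, hs.eq_of_le (isTransversal_image_of_mem_piFinset hc) ?_⟩
    exact Finset.image_subset_iff.2 fun i _ => hcs i
  · rintro ⟨c, hc, rfl⟩
    refine ⟨isTransversal_image_of_mem_piFinset hc, fun s hs hsub => ?_⟩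
    intro a ha
    obtain ⟨i, -, rfl⟩ := Finset.mem_image.1 ha
    obtain ⟨b, hb, hbs⟩ := hs i
    obtain ⟨j, -, rfl⟩ := Finset.mem_image.1 (hsub hbs)
    rwa [eq_of_mem_of_pairwise_disjoint hB (Fintype.mem_piFinset.1 hc j) hb] at hbs

theorem card_image_of_mem_piFinset (hB : Pairwise (Disjoint on B)) {c : ι → α}
    (hc : c ∈ Fintype.piFinset B) : (univ.image c).card = Fintype.card ι :=
  Finset.card_image_of_injective _ fun i j hij => eq_of_mem_of_pairwise_disjoint hB
    (Fintype.mem_piFinset.1 hc i) (hij ▸ Fintype.mem_piFinset.1 hc j)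

theorem injOn_image_piFinset (hB : Pairwise (Disjoint on B)) :
    Set.InjOn (fun c : ι → α => univ.image c) (Fintype.piFinset B) := by
  intro c hc c' hc' (hcc' : univ.image c = univ.image c')
  funext i
  obtain ⟨j, -, hj⟩ := Finset.mem_image.1 (hcc' ▸ Finset.mem_image_of_mem c (mem_univ i))
  have hji : j = i := eq_of_mem_of_pairwise_disjoint hB (Fintype.mem_piFinset.1 hc' j)
    (hj ▸ Fintype.mem_piFinset.1 hc i)
  rw [← hj, hji]

end Transversal

section Caterpillar

/-- The variables tested at level `j` of the caterpillar, counted from the bottom. -/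
def catBlock : ℕ → Finset ℕ
  | 0 => {1}
  | j + 1 => {2 * (j + 1), 2 * (j + 1) + 1}

theorem div_two_of_mem_catBlock {j v : ℕ} (hv : v ∈ catBlock j) : v / 2 = j := by
  cases j <;> simp only [catBlock, Finset.mem_insert, Finset.mem_singleton] at hv <;> omega

theorem pairwise_disjoint_catBlock (k : ℕ) :
    Pairwise (Disjoint on fun j : Fin k => catBlock j) :=
  fun _ _ hij => Finset.disjoint_left.2 fun _ hi hj =>
    hij (Fin.ext ((div_two_of_mem_catBlock hi).symm.trans (div_two_of_mem_catBlock hj)))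

theorem prod_card_catBlock (k : ℕ) : ∏ j : Fin (k + 1), (catBlock j).card = 2 ^ k := by
  rw [Fin.prod_univ_succ]
  simp [catBlock]

theorem cat_eq_true_of_forall_catBlock {y : ℕ → Bool} :
    ∀ k, (∀ j < k + 1, ∃ v ∈ catBlock j, y v = true) → cat (k + 1) y = true
  | 0, h => by
    obtain ⟨v, hv, hyv⟩ := h 0 Nat.one_pos
    rw [catBlock, Finset.mem_singleton] at hv
    rwa [cat, ← hv]
  | k + 1, h => by
    have ih := cat_eq_true_of_forall_catBlock k fun j hj => h j (by omega)
    obtain ⟨v, hv, hyv⟩ := h (k + 1) (by omega)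
    simp only [catBlock, Finset.mem_insert, Finset.mem_singleton] at hv
    rcases hv with rfl | rfl <;> cases h2 : y (2 * (k + 1)) <;> simp_all [cat]

theorem cat_eq_false_off_catBlock {j : ℕ} :
    ∀ k, j < k → cat k (fun v => !decide (v ∈ catBlock j)) = false
  | 1, hj => by
    obtain rfl : j = 0 := by omega
    simp [cat, catBlock]
  | k + 2, hj => by
    rcases Nat.lt_succ_iff_lt_or_eq.1 hj with hj | rfl
    · have ha : 2 * (k + 1) ∉ catBlock j := fun h => by
        have := div_two_of_mem_catBlock h; omega
      have hb : 2 * (k + 1) + 1 ∉ catBlock j := fun h => by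
        have := div_two_of_mem_catBlock h; omega
      simp [cat, ha, hb, cat_eq_false_off_catBlock (k + 1) hj]
    · simp [cat, catBlock]

theorem isSufficientSet_cat (k : ℕ) :
    IsSufficientSet (cat (k + 1)) (fun _ => true) =
      IsTransversal fun j : Fin (k + 1) => catBlock j := by
  funext s
  apply propext
  constructor
  · intro hs j
    by_contra! hmiss
    have := hs (fun v => !decide (v ∈ catBlock j)) fun v hv => by
      simpa using fun hvj => hmiss v hvj hv
    rw [cat_eq_false_off_catBlock (k + 1) j.isLt] at this
    exact Bool.false_ne_true this
  · intro hs y hy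
    refine cat_eq_true_of_forall_catBlock k fun j hj => ?_
    obtain ⟨v, hv, hvs⟩ := hs ⟨j, hj⟩
    exact ⟨v, hv, hy v hvs⟩

end Caterpillar

/-- For the all-ones instance, the number of minimal sufficient reasons given `cat k`
is `2^(k-1)`, and each minimal sufficient reason contains exactly `k` literals. -/
theorem stmt_9 (k : ℕ) (hk : 1 ≤ k) :
    {t : Term ℕ | MinSuffReason (cat k) (fun _ => true) t}.ncard = 2 ^ (k - 1) ∧
    ∀ t : Term ℕ, MinSuffReason (cat k) (fun _ => true) t → t.card = k := by
  obtain ⟨m, rfl⟩ := Nat.exists_eq_add_of_le' hk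
  have hB := pairwise_disjoint_catBlock (m + 1)
  let reasons : Finset (Term ℕ) :=
    ((Fintype.piFinset fun j : Fin (m + 1) => catBlock j).image fun c => univ.image c).image
      (Term.restrict fun _ => true)
  have hsuff (t : Term ℕ) : SuffReason (cat (m + 1)) (fun _ => true) t ↔ t ∈ reasons := by
    simp only [reasons, suffReason_iff, isSufficientSet_cat, minimal_isTransversal_iff hB,
      Finset.mem_image (s := Finset.image _ _) (f := Term.restrict _), eq_comm]
  have hcard (t : Term ℕ) (ht : SuffReason (cat (m + 1)) (fun _ => true) t) : t.card = m + 1 := by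
    obtain ⟨s, hs, rfl⟩ := Finset.mem_image.1 ((hsuff t).1 ht)
    obtain ⟨c, hc, rfl⟩ := Finset.mem_image.1 hs
    rw [Term.card_restrict, card_image_of_mem_piFinset hB hc, Fintype.card_fin]
  have hmin (t : Term ℕ) := minSuffReason_iff_of_card_eq hcard (t := t)
  refine ⟨?_, fun t ht => hcard t ((hmin t).1 ht)⟩
  rw [show {t | MinSuffReason (cat (m + 1)) (fun _ => true) t} = ↑reasons from
      Set.ext fun t => (hmin t).trans (hsuff t),
    Set.ncard_coe_finset, card_image_of_injective _ (Term.restrict_injective _),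
    card_image_of_injOn (injOn_image_piFinset hB), Fintype.card_piFinset, prod_card_catBlock,
    Nat.add_sub_cancel]
end

section
/- Let f : {0,1}^n → {0,1} be a Boolean function and x an instance with f(x) = 1. The disjunction of all sufficient reasons for x given f (the 'complete reason' for x given f) is a Boolean function that is monotone with respect to the partial order induced by x (i.e., ordering {0,1} so that the value x_i is the top element in coordinate i). -/
theorem Term.sat_of_agree_of_le {V : Type*} {t : Term V} {x y z : V → Bool}
    (htx : t.sat x) (hty : t.sat y) (hle : ∀ i, z i ≠ x i → y i ≠ x i) : t.sat z := by
  intro p hp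
  by_contra hz
  exact hle p.1 (fun h => hz (h ▸ htx p hp)) ((hty p hp).trans (htx p hp).symm)

theorem stmt_12_general {n : ℕ} (f : (Fin n → Bool) → Bool) (x : Fin n → Bool)
    (y z : Fin n → Bool)
    (hle : ∀ i : Fin n, z i ≠ x i → y i ≠ x i)
    (hy : ∃ t : Term (Fin n), SuffReason f x t ∧ Term.sat t y) :
    ∃ t : Term (Fin n), SuffReason f x t ∧ Term.sat t z := by
  obtain ⟨t, hsr, hty⟩ := hy
  exact ⟨t, hsr, Term.sat_of_agree_of_le hsr.2 hty hle⟩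

/-- The complete reason for `x` given `f` (the disjunction of all sufficient reasons
for `x` given `f`) is monotone with respect to the order induced by `x`:
if `y ≤_x z` (i.e., `z` agrees with `x` wherever `y` disagrees less, formally
every coordinate where `z` differs from `x` is one where `y` differs from `x`),
then the complete reason holds at `z` whenever it holds at `y`. -/
theorem stmt_12 {n : ℕ} (f : (Fin n → Bool) → Bool) (x : Fin n → Bool)
    (hx : f x = true) (y z : Fin n → Bool)
    (hle : ∀ i : Fin n, z i ≠ x i → y i ≠ x i)
    (hy : ∃ t : Term (Fin n), SuffReason f x t ∧ Term.sat t y) :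
    ∃ t : Term (Fin n), SuffReason f x t ∧ Term.sat t z :=
  stmt_12_general f x y z hle hy
end

section
/- Let f : {0,1}^n → {0,1} and x an instance with f(x) = 1. The contrastive explanations for x given f and the sufficient reasons for x given f satisfy a minimal hitting set duality: viewing all explanations as subsets of the set of literals of t_x, the contrastive explanations are exactly the minimal hitting sets of the family of sufficient reasons, and vice versa. -/
/-- The term `t_x` consisting of the `n` literals satisfied by the instance `x`. -/
def termOf {n : ℕ} (x : Fin n → Bool) : Term (Fin n) :=
  Finset.univ.image fun i => (i, x i)

/-- A contrastive explanation for `x` given `f`: a subset `t` of the literals of `x`,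
minimal under inclusion, such that `t_x \ t` is not an implicant of `f`. -/
def ContrastiveExpl {n : ℕ} (f : (Fin n → Bool) → Bool) (x : Fin n → Bool)
    (t : Term (Fin n)) : Prop :=
  t ⊆ termOf x ∧ ¬ Implicant f (termOf x \ t) ∧ ∀ s ⊂ t, Implicant f (termOf x \ s)

/-!
Inside `t_x` every subterm is consistent, so being an implicant is monotone there, and a term
`t ⊆ t_x` is an implicant iff it contains a sufficient reason (a minimal implicant below it).
Applied to `t_x \ t`, this says that `t_x \ t` fails to be an implicant iff `t` meets every
sufficient reason; taking minimal such `t` gives the first duality. Dually, `t ⊆ t_x` is an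
implicant iff it meets every contrastive explanation: if it is not one, a minimal `s ⊆ t_x \ t`
with `t_x \ s` not an implicant is a contrastive explanation missing `t`. Taking minimal such
`t` gives the second duality.
-/

section Explanations

variable {n : ℕ} {f : (Fin n → Bool) → Bool} {x : Fin n → Bool}

lemma mem_termOf {p : Fin n × Bool} : p ∈ termOf x ↔ x p.1 = p.2 := by
  simp only [termOf, Finset.mem_image, Finset.mem_univ, true_and]
  exact ⟨by rintro ⟨i, rfl⟩; rfl, fun h => ⟨p.1, Prod.ext rfl h⟩⟩

lemma Term.sat_iff_subset_termOf {t : Term (Fin n)} : t.sat x ↔ t ⊆ termOf x :=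
  forall₂_congr fun _ _ => mem_termOf.symm

lemma Term.consistent_of_subset_termOf {t : Term (Fin n)} (ht : t ⊆ termOf x) :
    t.consistent := by
  rintro v ⟨htrue, hfalse⟩
  have hv : x v = true := mem_termOf.1 (ht htrue)
  have hv' : x v = false := mem_termOf.1 (ht hfalse)
  exact absurd (hv.symm.trans hv') (by decide)

lemma Implicant.mono {V : Type*} {f : (V → Bool) → Bool} {s t : Term V}
    (hs : Implicant f s) (hst : s ⊆ t) (ht : t.consistent) : Implicant f t :=
  ⟨ht, fun y hy => hs.2 y fun p hp => hy p (hst hp)⟩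

lemma inter_eq_empty_iff_subset_termOf_sdiff {s t : Term (Fin n)} (hs : s ⊆ termOf x) :
    t ∩ s = ∅ ↔ s ⊆ termOf x \ t := by
  rw [Finset.subset_sdiff, ← Finset.disjoint_iff_inter_eq_empty, disjoint_comm]
  exact (and_iff_right hs).symm

lemma suffReason_iff_s17 {t : Term (Fin n)} :
    SuffReason f x t ↔ t ⊆ termOf x ∧ Implicant f t ∧ ∀ s ⊂ t, ¬ Implicant f s := by
  rw [SuffReason, PrimeImplicant, Term.sat_iff_subset_termOf]
  tauto

lemma implicant_iff_exists_suffReason_subset {t : Term (Fin n)} (ht : t ⊆ termOf x) :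
    Implicant f t ↔ ∃ s, SuffReason f x s ∧ s ⊆ t := by
  constructor
  · intro himp
    obtain ⟨s, hst, hmin⟩ := exists_minimal_le_of_wellFoundedLT (Implicant f) t himp
    exact ⟨s, suffReason_iff_s17.2 ⟨hst.trans ht, hmin.prop,
      fun s' hs' => minimal_iff_forall_lt.1 hmin |>.2 hs'⟩, hst⟩
  · rintro ⟨s, hs, hst⟩
    exact (suffReason_iff_s17.1 hs).2.1.mono hst (Term.consistent_of_subset_termOf ht)

lemma implicant_sdiff_iff_exists_suffReason {t : Term (Fin n)} :
    Implicant f (termOf x \ t) ↔ ∃ s, SuffReason f x s ∧ t ∩ s = ∅ := by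
  rw [implicant_iff_exists_suffReason_subset Finset.sdiff_subset]
  refine exists_congr fun s => and_congr_right fun hs => ?_
  exact (inter_eq_empty_iff_subset_termOf_sdiff (suffReason_iff_s17.1 hs).1).symm

lemma not_implicant_sdiff_iff_forall_suffReason {t : Term (Fin n)} :
    ¬ Implicant f (termOf x \ t) ↔ ∀ s, SuffReason f x s → (t ∩ s).Nonempty := by
  simp only [implicant_sdiff_iff_exists_suffReason, Finset.nonempty_iff_ne_empty]
  push Not
  rfl

lemma exists_contrastiveExpl_of_not_implicant {t : Term (Fin n)} (ht : t ⊆ termOf x)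
    (himp : ¬ Implicant f t) : ∃ s, ContrastiveExpl f x s ∧ t ∩ s = ∅ := by
  let P : Term (Fin n) → Prop := fun s => s ⊆ termOf x \ t ∧ ¬ Implicant f (termOf x \ s)
  have hP : P (termOf x \ t) := ⟨subset_rfl, by rwa [Finset.sdiff_sdiff_eq_self ht]⟩
  obtain ⟨s, -, hmin⟩ := exists_minimal_le_of_wellFoundedLT P _ hP
  obtain ⟨hs, hsimp⟩ := hmin.prop
  have hsx : s ⊆ termOf x := hs.trans Finset.sdiff_subset
  refine ⟨s, ⟨hsx, hsimp, fun s' hs' => ?_⟩,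
    (inter_eq_empty_iff_subset_termOf_sdiff hsx).2 hs⟩
  by_contra hs'imp
  exact (minimal_iff_forall_lt.1 hmin).2 hs' ⟨hs'.subset.trans hs, hs'imp⟩

lemma implicant_iff_forall_contrastiveExpl {t : Term (Fin n)} (ht : t ⊆ termOf x) :
    Implicant f t ↔ ∀ s, ContrastiveExpl f x s → (t ∩ s).Nonempty := by
  constructor
  · intro himp s hs
    rw [Finset.nonempty_iff_ne_empty]
    intro hts
    have hsub := (inter_eq_empty_iff_subset_termOf_sdiff ht).1 (Finset.inter_comm s t ▸ hts)
    exact hs.2.1 (himp.mono hsub (Term.consistent_of_subset_termOf Finset.sdiff_subset))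
  · intro hhit
    by_contra himp
    obtain ⟨s, hs, hts⟩ := exists_contrastiveExpl_of_not_implicant ht himp
    exact (Finset.nonempty_iff_ne_empty.1 (hhit s hs)) hts

lemma not_implicant_iff_exists_contrastiveExpl {t : Term (Fin n)} (ht : t ⊆ termOf x) :
    ¬ Implicant f t ↔ ∃ s, ContrastiveExpl f x s ∧ t ∩ s = ∅ := by
  simp only [implicant_iff_forall_contrastiveExpl ht, Finset.nonempty_iff_ne_empty]
  push Not
  rfl

end Explanations

theorem stmt_17_general {n : ℕ} (f : (Fin n → Bool) → Bool) (x : Fin n → Bool)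
    (t : Term (Fin n)) :
    (ContrastiveExpl f x t ↔
      (t ⊆ termOf x ∧ (∀ s : Term (Fin n), SuffReason f x s → (t ∩ s).Nonempty) ∧
        ∀ t' ⊂ t, ∃ s : Term (Fin n), SuffReason f x s ∧ t' ∩ s = ∅)) ∧
    (SuffReason f x t ↔
      (t ⊆ termOf x ∧ (∀ s : Term (Fin n), ContrastiveExpl f x s → (t ∩ s).Nonempty) ∧
        ∀ t' ⊂ t, ∃ s : Term (Fin n), ContrastiveExpl f x s ∧ t' ∩ s = ∅)) := by
  refine ⟨and_congr_right fun ht => and_congr not_implicant_sdiff_iff_forall_suffReason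
      (forall₂_congr fun _ _ => implicant_sdiff_iff_exists_suffReason),
    suffReason_iff_s17.trans (and_congr_right fun ht =>
      and_congr (implicant_iff_forall_contrastiveExpl ht) (forall₂_congr fun _ ht' =>
        not_implicant_iff_exists_contrastiveExpl (ht'.subset.trans ht)))⟩

/-- Minimal hitting set duality between contrastive explanations and sufficient reasons:
the contrastive explanations for `x` given `f` are exactly the minimal hitting sets
(within the literals of `x`) of the family of sufficient reasons, and vice versa. -/
theorem stmt_17 {n : ℕ} (f : (Fin n → Bool) → Bool) (x : Fin n → Bool)
    (hx : f x = true) (t : Term (Fin n)) :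
    (ContrastiveExpl f x t ↔
      (t ⊆ termOf x ∧ (∀ s : Term (Fin n), SuffReason f x s → (t ∩ s).Nonempty) ∧
        ∀ t' ⊂ t, ∃ s : Term (Fin n), SuffReason f x s ∧ t' ∩ s = ∅)) ∧
    (SuffReason f x t ↔
      (t ⊆ termOf x ∧ (∀ s : Term (Fin n), ContrastiveExpl f x s → (t ∩ s).Nonempty) ∧
        ∀ t' ⊂ t, ∃ s : Term (Fin n), ContrastiveExpl f x s ∧ t' ∩ s = ∅)) :=
  stmt_17_general f x t
end
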